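/- Let g = 2r + 1 with r ≥ 2, and let G_1 = π_g / N(ℬ^g_1). Then the images of a_{r+1} and c_r in G_1 are trivial, and for every 1 ≤ k ≤ r the images of the words a_k a_{g+1−k} and b_k a_{g+1−k} b_{g+1−k} a_{g+1−k}^{-1} in G_1 are trivial. -/

import Mathlib

namespace Paper

/-- The free group `F_g` on the `2g` generators `a_1, b_1, …, a_g, b_g`
(the pair `(i, false)` is `a_{i+1}`, the pair `(i, true)` is `b_{i+1}`). -/
abbrev F (g : ℕ) := FreeGroup (Fin g × Bool)

/-- The generator `a_i` of `F_g`, for `1 ≤ i ≤ g`; by convention `a_i = 1` for out-of-range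
indices (in particular `a_{g+1} = 1`). -/
def a (g i : ℕ) : F g :=
  if h : 1 ≤ i ∧ i ≤ g then FreeGroup.of (⟨i - 1, by omega⟩, false) else 1

/-- The generator `b_i` of `F_g`, for `1 ≤ i ≤ g`. -/
def b (g i : ℕ) : F g :=
  if h : 1 ≤ i ∧ i ≤ g then FreeGroup.of (⟨i - 1, by omega⟩, true) else 1

/-- The word `c_i = b_i⁻¹ ⋯ b_2⁻¹ b_1⁻¹ (a_1 b_1 a_1⁻¹)(a_2 b_2 a_2⁻¹) ⋯ (a_i b_i a_i⁻¹)`,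
with `c_0 = 1`. -/
def c (g i : ℕ) : F g :=
  (((List.range i).reverse.map fun j => (b g (j + 1))⁻¹).prod) *
    (((List.range i).map fun j => a g (j + 1) * b g (j + 1) * (a g (j + 1))⁻¹).prod)

/-- The product `b_i b_{i+1} ⋯ b_j`. -/
def prodb (g i j : ℕ) : F g := ((List.range (j + 1 - i)).map fun l => b g (i + l)).prod

/-- `B^h_{0,1} = b_1 b_2 ⋯ b_h`. -/
def B01 (g h : ℕ) : F g := prodb g 1 h

/-- `B^h_{0,2} = b_1 b_2 ⋯ b_h · c_h a_{h+1}`. -/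
def B02 (g h : ℕ) : F g := prodb g 1 h * c g h * a g (h + 1)

/-- `B^h_{0,s}` for `s = 1, 2`. -/
def B0 (g s h : ℕ) : F g := if s = 1 then B01 g h else B02 g h

/-- `B^h_{2k-1} = a_k · b_k b_{k+1} ⋯ b_{h+1-k} · c_{h+1-k} a_{h+1-k}`. -/
def Bodd (g h k : ℕ) : F g :=
  a g k * prodb g k (h + 1 - k) * c g (h + 1 - k) * a g (h + 1 - k)

/-- `B^h_{2k} = a_k · b_{k+1} b_{k+2} ⋯ b_{h-k} · c_{h-k} a_{h+1-k}`. -/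
def Beven (g h k : ℕ) : F g :=
  a g k * prodb g (k + 1) (h - k) * c g (h - k) * a g (h + 1 - k)

/-- The set of words `ℬ^h_s`: it consists of `B^h_{0,s}, B^h_1, …, B^h_h` (the odd-indexed
`B^h_{2k-1}` for `2k - 1 ≤ h` and the even-indexed `B^h_{2k}` for `2k ≤ h`), together with
`a_{r+1}` and `c_r a_{r+1}` when `h = 2r + 1` is odd. -/
def Bset (g s h : ℕ) : Set (F g) :=
  {B0 g s h}
    ∪ {w | ∃ k, 1 ≤ k ∧ 2 * k - 1 ≤ h ∧ w = Bodd g h k}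
    ∪ {w | ∃ k, 1 ≤ k ∧ 2 * k ≤ h ∧ w = Beven g h k}
    ∪ (if h % 2 = 1 then {a g (h / 2 + 1), c g (h / 2) * a g (h / 2 + 1)} else (∅ : Set (F g)))

/-- The genus-`g` surface group `π_g`, presented with generators `a_1, b_1, …, a_g, b_g`
and the single relator `c_g`. -/
abbrev pi (g : ℕ) := PresentedGroup ({c g g} : Set (F g))

/-- The natural projection `F_g → π_g`. -/
abbrev toPi (g : ℕ) : F g →* pi g := PresentedGroup.mk _

/-- The quotient of `π_g` by the normal closure of the images of a set `S` of words. -/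
abbrev quotBy (g : ℕ) (S : Set (F g)) :=
  pi g ⧸ Subgroup.normalClosure (toPi g '' S)

/-- The projection `π_g → π_g / N(S)`. -/
abbrev projBy (g : ℕ) (S : Set (F g)) : pi g →* quotBy g S :=
  QuotientGroup.mk' _

/-! The relators `B_{2k}` and `B_{2k+1}` of `ℬ^g_1` share the middle word
`Q_k = b_{k+1} ⋯ b_{g-k} c_{g-k}` (`Bcore g g k`), and `B_{2k-1} = a_k b_k Q_k a_{g+1-k} b_{g+1-k}`.
So in `G_1` the relator `B_{2k}` reads `Q_k = a_k⁻¹ a_{g+1-k}⁻¹`; substituting this into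
`B_{2k+1} = a_{k+1} Q_k a_{g-k}` shows that `a_{k+1} a_{g-k} = 1` forces `a_k a_{g+1-k} = 1`,
and a downward induction starting from the relator `a_{r+1}` gives all of these relations.
Substituting into `B_{2k-1}` then gives `a_k b_k a_k⁻¹ b_{g+1-k} = 1`, which is the
`b`-relation once `a_{g+1-k} = a_k⁻¹`. Finally, `c_r = 1` follows from the relator `c_r a_{r+1}`.
-/

lemma prodb_eq_b_mul_prodb (g : ℕ) {i j : ℕ} (h : i ≤ j) :
    prodb g i j = b g i * prodb g (i + 1) j := by
  rw [prodb, prodb, show j + 1 - i = j + 1 - (i + 1) + 1 by omega, List.range_succ_eq_map]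
  simp only [List.map_cons, List.map_map, List.prod_cons, add_zero, Function.comp_def,
    add_assoc, add_comm 1]

lemma prodb_succ_eq_prodb_mul_b (g : ℕ) {i j : ℕ} (h : i ≤ j + 1) :
    prodb g i (j + 1) = prodb g i j * b g (j + 1) := by
  rw [prodb, prodb, show j + 1 + 1 - i = j + 1 - i + 1 by omega, List.range_succ,
    List.map_append, List.prod_append, List.map_singleton, List.prod_singleton]
  congr 2
  omega

lemma c_succ (g m : ℕ) :
    c g (m + 1) =
      (b g (m + 1))⁻¹ * c g m * (a g (m + 1) * b g (m + 1) * (a g (m + 1))⁻¹) := by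
  simp only [c, List.range_succ, List.reverse_append, List.reverse_singleton,
    List.singleton_append, List.map_cons, List.map_nil, List.map_append, List.prod_cons,
    List.prod_nil, List.prod_append, mul_one]
  group

def Bcore (g h k : ℕ) : F g := prodb g (k + 1) (h - k) * c g (h - k)

lemma Beven_eq (g h k : ℕ) : Beven g h k = a g k * Bcore g h k * a g (h + 1 - k) := by
  simp only [Beven, Bcore, mul_assoc]

lemma Bodd_succ_eq (g h k : ℕ) : Bodd g h (k + 1) = a g (k + 1) * Bcore g h k * a g (h - k) := by
  simp only [Bodd, Bcore, mul_assoc, show h + 1 - (k + 1) = h - k by omega]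

lemma Bodd_eq {g h k : ℕ} (hk : 2 * k ≤ h) :
    Bodd g h k = a g k * b g k * Bcore g h k * (a g (h + 1 - k) * b g (h + 1 - k)) := by
  obtain ⟨m, hm⟩ : ∃ m, h + 1 - k = m + 1 := ⟨h - k, by omega⟩
  rw [Bodd, Bcore, hm, prodb_eq_b_mul_prodb g (by omega), prodb_succ_eq_prodb_mul_b g (by omega),
    c_succ, show h - k = m by omega]
  group

section Relations

variable {g s h : ℕ} {G : Type*} [Group G] {φ : F g →* G}

lemma Bodd_mem_Bset {k : ℕ} (hk : 1 ≤ k) (hkh : 2 * k - 1 ≤ h) : Bodd g h k ∈ Bset g s h :=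
  .inl (.inl (.inr ⟨k, hk, hkh, rfl⟩))

lemma Beven_mem_Bset {k : ℕ} (hk : 1 ≤ k) (hkh : 2 * k ≤ h) : Beven g h k ∈ Bset g s h :=
  .inl (.inr ⟨k, hk, hkh, rfl⟩)

lemma a_mem_Bset {r : ℕ} (hh : h = 2 * r + 1) : a g (r + 1) ∈ Bset g s h := by
  refine .inr ?_
  rw [if_pos (by omega), show h / 2 = r by omega]
  exact .inl rfl

lemma c_mul_a_mem_Bset {r : ℕ} (hh : h = 2 * r + 1) : c g r * a g (r + 1) ∈ Bset g s h := by
  refine .inr ?_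
  rw [if_pos (by omega), show h / 2 = r by omega]
  exact .inr rfl

variable (hφ : ∀ w ∈ Bset g s h, φ w = 1)
include hφ

lemma map_Bcore {k : ℕ} (hk : 1 ≤ k) (hkh : 2 * k ≤ h) :
    φ (Bcore g h k) = (φ (a g k))⁻¹ * (φ (a g (h + 1 - k)))⁻¹ := by
  have hB := hφ _ (Beven_mem_Bset (s := s) hk hkh)
  rw [Beven_eq, map_mul, map_mul, mul_eq_one_iff_eq_inv] at hB
  exact eq_inv_mul_of_mul_eq hB

lemma map_a_mul_a_of_succ {k : ℕ} (hk : 1 ≤ k) (hkh : 2 * k + 1 ≤ h)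
    (hsucc : φ (a g (k + 1) * a g (h - k)) = 1) : φ (a g k * a g (h + 1 - k)) = 1 := by
  have hB := hφ _ (Bodd_mem_Bset (s := s) (k := k + 1) (by omega) (by omega))
  rw [map_mul, mul_eq_one_iff_eq_inv'] at hsucc
  rw [Bodd_succ_eq, map_mul, map_mul, map_Bcore hφ hk (by omega), hsucc, conj_eq_one_iff,
    ← mul_inv_rev, inv_eq_one] at hB
  rw [map_mul, mul_eq_one_comm, hB]

lemma map_a_mul_a {r : ℕ} (hh : h = 2 * r + 1) {k : ℕ} (hk : 1 ≤ k) (hkr : k ≤ r + 1) :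
    φ (a g k * a g (h + 1 - k)) = 1 := by
  induction hkr using Nat.decreasingInduction with
  | self => rw [show h + 1 - (r + 1) = r + 1 by omega, map_mul, hφ _ (a_mem_Bset hh), one_mul]
  | of_succ k hkr ih =>
    have hsucc : φ (a g (k + 1) * a g (h - k)) = 1 := by
      rw [show h - k = h + 1 - (k + 1) by omega]
      exact ih (by omega)
    exact map_a_mul_a_of_succ hφ hk (by omega) hsucc

lemma map_b_mul_a_mul_b_mul_a_inv {k : ℕ} (hk : 1 ≤ k) (hkh : 2 * k ≤ h)
    (ha : φ (a g k * a g (h + 1 - k)) = 1) :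
    φ (b g k * a g (h + 1 - k) * b g (h + 1 - k) * (a g (h + 1 - k))⁻¹) = 1 := by
  have hB := hφ _ (Bodd_mem_Bset (s := s) hk (by omega))
  simp only [Bodd_eq hkh, map_mul] at hB
  rw [map_Bcore hφ hk hkh] at hB
  rw [map_mul, mul_eq_one_iff_eq_inv'] at ha
  simp only [map_mul, map_inv, ha, inv_inv]
  rw [← conj_eq_one_iff (a := φ (a g k)), ← hB, ha]
  group

end Relations

lemma projBy_toPi_eq_one {g : ℕ} {S : Set (F g)} {w : F g} (hw : w ∈ S) :
    projBy g S (toPi g w) = 1 :=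
  (QuotientGroup.eq_one_iff _).mpr (Subgroup.subset_normalClosure ⟨w, hw, rfl⟩)

theorem G1_relations_odd_general (r g : ℕ) (hg : g = 2 * r + 1) :
    projBy g (Bset g 1 g) (toPi g (a g (r + 1))) = 1 ∧
      projBy g (Bset g 1 g) (toPi g (c g r)) = 1 ∧
      ∀ k, 1 ≤ k → k ≤ r →
        projBy g (Bset g 1 g) (toPi g (a g k * a g (g + 1 - k))) = 1 ∧
        projBy g (Bset g 1 g)
          (toPi g (b g k * a g (g + 1 - k) * b g (g + 1 - k) * (a g (g + 1 - k))⁻¹)) = 1 := by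
  let φ := (projBy g (Bset g 1 g)).comp (toPi g)
  have hφ : ∀ w ∈ Bset g 1 g, φ w = 1 := fun _ hw => projBy_toPi_eq_one hw
  have ha : φ (a g (r + 1)) = 1 := hφ _ (a_mem_Bset hg)
  have hc : φ (c g r) = 1 := by simpa [ha] using hφ _ (c_mul_a_mem_Bset hg)
  refine ⟨ha, hc, fun k hk hkr => ?_⟩
  have hak : φ (a g k * a g (g + 1 - k)) = 1 := map_a_mul_a hφ hg hk (by omega)
  exact ⟨hak, map_b_mul_a_mul_b_mul_a_inv hφ hk (by omega) hak⟩

/-- For `g = 2r + 1` with `r ≥ 2`, in `G_1 = π_g / N(ℬ^g_1)` the images of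
`a_{r+1}` and `c_r` are trivial, and the images of the words `a_k a_{g+1-k}` and
`b_k a_{g+1-k} b_{g+1-k} a_{g+1-k}⁻¹` are trivial for every `1 ≤ k ≤ r`. -/
theorem G1_relations_odd (r g : ℕ) (hr : 2 ≤ r) (hg : g = 2 * r + 1) :
    projBy g (Bset g 1 g) (toPi g (a g (r + 1))) = 1 ∧
      projBy g (Bset g 1 g) (toPi g (c g r)) = 1 ∧
      ∀ k, 1 ≤ k → k ≤ r →
        projBy g (Bset g 1 g) (toPi g (a g k * a g (g + 1 - k))) = 1 ∧
        projBy g (Bset g 1 g)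
          (toPi g (b g k * a g (g + 1 - k) * b g (g + 1 - k) * (a g (g + 1 - k))⁻¹)) = 1 :=
  G1_relations_odd_general r g hg
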